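/- arXiv:2506.13710 — 2 statements merged into one kernel-verified Lean document; each statement's English description precedes it below -/
import Mathlib

section
/- Let f : ℝⁿ → ℝ be differentiable, H ⪰ 0 symmetric, g := ∇f(x) ≠ 0, and suppose 0 < γ ≤ γ(x), where γ(x) is the largest radius such that ‖∇f(x+h) − ∇f(x) − Hh‖_* ≤ ‖g‖_*‖h‖/γ(x) holds for all h with ‖h‖ ≤ γ(x) and ⟨∇²f(x)h,h⟩ + ⟨g,h⟩ ≤ 0. Let x⁺ := x − (H + (‖g‖_*/γ)B)^{-1} g. Then f(x) − f(x⁺) ≥ (γ/8)·‖∇f(x⁺)‖_*²/‖∇f(x)‖_*. -/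
open Matrix
open scoped RealInnerProductSpace

noncomputable def normB {n : ℕ} (B : Matrix (Fin n) (Fin n) ℝ)
    (h : EuclideanSpace ℝ (Fin n)) : ℝ :=
  Real.sqrt ⟪h, Matrix.toEuclideanLin B h⟫

noncomputable def dualNormB {n : ℕ} (B : Matrix (Fin n) (Fin n) ℝ)
    (s : EuclideanSpace ℝ (Fin n)) : ℝ :=
  Real.sqrt ⟪s, Matrix.toEuclideanLin B⁻¹ s⟫

/-!
Write `λ = ‖g‖_* / γ` and `s = (H + λB)⁻¹ g`, so that `Hs + λBs = g`, `⟪g, s⟫ = ⟪Hs, s⟫ + λ‖s‖²`,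
and Cauchy–Schwarz gives `‖s‖ ≤ γ`. Differentiating the smoothness inequality along `h = -ts` at
`t = 0⁺` bounds the curvature: `⟪∇²f(x) s, s⟫ ≤ ⟪g, s⟫`. Hence every `h = -ts` with `t ∈ [0, 1]`
satisfies the side conditions, and the residual `∇f(x - ts) - g + tHs` has dual norm at most
`λ t ‖s‖`. Along the segment this gives `f x - f x⁺ ≥ ⟪g, s⟫ / 2 ≥ λ‖s‖² / 2`; at
`t = 1`, since `g - Hs = λBs`, it gives `‖∇f(x⁺)‖_* ≤ 2λ‖s‖`. The two bounds combine to the claim.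
-/

open Filter Set Topology

section QuadraticNorms

variable {n : ℕ} {M B : Matrix (Fin n) (Fin n) ℝ}

theorem normB_smul (M : Matrix (Fin n) (Fin n) ℝ) (c : ℝ) (v : EuclideanSpace ℝ (Fin n)) :
    normB M (c • v) = |c| * normB M v := by
  rw [normB, map_smul, real_inner_smul_left, real_inner_smul_right, ← mul_assoc, ← sq,
    ← sq_abs, Real.sqrt_mul (sq_nonneg _), Real.sqrt_sq (abs_nonneg c), normB]

theorem normB_neg (M : Matrix (Fin n) (Fin n) ℝ) (v : EuclideanSpace ℝ (Fin n)) :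
    normB M (-v) = normB M v := by
  simpa using normB_smul M (-1) v

theorem normB_nonneg (M : Matrix (Fin n) (Fin n) ℝ) (v : EuclideanSpace ℝ (Fin n)) :
    0 ≤ normB M v :=
  Real.sqrt_nonneg _

theorem continuous_normB (M : Matrix (Fin n) (Fin n) ℝ) : Continuous (normB M) :=
  Real.continuous_sqrt.comp
    (continuous_id.inner (toEuclideanLin M).continuous_of_finiteDimensional)

theorem sq_normB (hM : M.PosSemidef) (v : EuclideanSpace ℝ (Fin n)) :
    normB M v ^ 2 = ⟪v, toEuclideanLin M v⟫ :=
  Real.sq_sqrt ((isPositive_toEuclideanLin_iff.mpr hM).inner_nonneg_right v)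

theorem normB_pos (hM : M.PosDef) {v : EuclideanSpace ℝ (Fin n)} (hv : v ≠ 0) :
    0 < normB M v := by
  refine Real.sqrt_pos.mpr ?_
  simpa [toLpLin_apply, PiLp.inner_apply, dotProduct, mul_comm] using
    hM.dotProduct_mulVec_pos (x := WithLp.ofLp v) (by simpa using hv)

-- `normB M` is the seminorm of the inner product `M.toInnerProductSpace` on `Fin n → ℝ`.
theorem inner_le_normB_mul_normB (hM : M.PosSemidef) (u v : EuclideanSpace ℝ (Fin n)) :
    ⟪u, toEuclideanLin M v⟫ ≤ normB M u * normB M v :=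
  let _ := M.toSeminormedAddCommGroup hM
  let _ := M.toInnerProductSpace hM
  real_inner_le_norm (WithLp.ofLp u) (WithLp.ofLp v)

theorem normB_add_le (hM : M.PosSemidef) (u v : EuclideanSpace ℝ (Fin n)) :
    normB M (u + v) ≤ normB M u + normB M v := by
  have h := @norm_add_le _ (M.toSeminormedAddCommGroup hM).toSeminormedAddGroup
    (WithLp.ofLp u) (WithLp.ofLp v)
  rwa [← WithLp.ofLp_add 2 u v] at h

theorem toEuclideanLin_inv_apply_apply (hM : IsUnit M.det) (v : EuclideanSpace ℝ (Fin n)) :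
    toEuclideanLin M⁻¹ (toEuclideanLin M v) = v := by
  simp [toLpLin_apply, mulVec_mulVec, nonsing_inv_mul _ hM]

theorem toEuclideanLin_apply_inv_apply (hM : IsUnit M.det) (v : EuclideanSpace ℝ (Fin n)) :
    toEuclideanLin M (toEuclideanLin M⁻¹ v) = v := by
  simp [toLpLin_apply, mulVec_mulVec, mul_nonsing_inv _ hM]

theorem dualNormB_nonneg (B : Matrix (Fin n) (Fin n) ℝ) (v : EuclideanSpace ℝ (Fin n)) :
    0 ≤ dualNormB B v :=
  Real.sqrt_nonneg _

theorem dualNormB_pos (hB : B.PosDef) {v : EuclideanSpace ℝ (Fin n)} (hv : v ≠ 0) :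
    0 < dualNormB B v :=
  normB_pos hB.inv hv

theorem dualNormB_smul (B : Matrix (Fin n) (Fin n) ℝ) (c : ℝ) (v : EuclideanSpace ℝ (Fin n)) :
    dualNormB B (c • v) = |c| * dualNormB B v :=
  normB_smul B⁻¹ c v

theorem dualNormB_neg (B : Matrix (Fin n) (Fin n) ℝ) (v : EuclideanSpace ℝ (Fin n)) :
    dualNormB B (-v) = dualNormB B v :=
  normB_neg B⁻¹ v

theorem continuous_dualNormB (B : Matrix (Fin n) (Fin n) ℝ) : Continuous (dualNormB B) :=
  continuous_normB B⁻¹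

theorem dualNormB_add_le (hB : B.PosDef) (u v : EuclideanSpace ℝ (Fin n)) :
    dualNormB B (u + v) ≤ dualNormB B u + dualNormB B v :=
  normB_add_le hB.inv.posSemidef u v

theorem dualNormB_toEuclideanLin (hB : B.PosDef) (v : EuclideanSpace ℝ (Fin n)) :
    dualNormB B (toEuclideanLin B v) = normB B v := by
  rw [dualNormB, toEuclideanLin_inv_apply_apply hB.det_pos.ne'.isUnit, real_inner_comm, normB]

theorem inner_le_dualNormB_mul_normB (hB : B.PosDef) (u v : EuclideanSpace ℝ (Fin n)) :
    ⟪u, v⟫ ≤ dualNormB B u * normB B v := by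
  calc ⟪u, v⟫ = ⟪u, toEuclideanLin B⁻¹ (toEuclideanLin B v)⟫ := by
        rw [toEuclideanLin_inv_apply_apply hB.det_pos.ne'.isUnit]
    _ ≤ dualNormB B u * dualNormB B (toEuclideanLin B v) :=
        inner_le_normB_mul_normB hB.inv.posSemidef u _
    _ = dualNormB B u * normB B v := by rw [dualNormB_toEuclideanLin hB]

end QuadraticNorms

section Calculus

theorem sub_div_two_le_sub_of_affine_le_deriv {φ φ' : ℝ → ℝ} {a b : ℝ}
    (hφ : ∀ t ∈ Icc (0 : ℝ) 1, HasDerivAt φ (φ' t) t)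
    (h : ∀ t ∈ Icc (0 : ℝ) 1, a - b * t ≤ φ' t) :
    a - b / 2 ≤ φ 1 - φ 0 := by
  let ψ t := φ t - (a * t - b / 2 * t ^ 2)
  have hψ : ∀ t ∈ Icc (0 : ℝ) 1, HasDerivAt ψ (φ' t - (a - b * t)) t := fun t ht => by
    refine ((hφ t ht).sub (((hasDerivAt_id' t).const_mul a).sub
      ((hasDerivAt_pow 2 t).const_mul (b / 2)))).congr_deriv ?_
    ring
  have hmono : MonotoneOn ψ (Icc 0 1) := by
    refine monotoneOn_of_hasDerivWithinAt_nonneg (f' := fun t => φ' t - (a - b * t))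
      (convex_Icc 0 1) (fun t ht => (hψ t ht).continuousAt.continuousWithinAt)
      (fun t ht => ?_) (fun t ht => ?_)
    all_goals rw [interior_Icc] at ht
    · exact (hψ t (Ioo_subset_Icc_self ht)).hasDerivWithinAt
    · exact sub_nonneg.mpr (h t (Ioo_subset_Icc_self ht))
  have := hmono (left_mem_Icc.mpr zero_le_one) (right_mem_Icc.mpr zero_le_one) zero_le_one
  simp only [ψ] at this
  linarith

variable {E : Type*} [NormedAddCommGroup E] [InnerProductSpace ℝ E] [CompleteSpace E]

theorem hasDerivAt_comp_sub_smul {f : E → ℝ} {x s : E} {t : ℝ}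
    (hf : DifferentiableAt ℝ f (x - t • s)) :
    HasDerivAt (fun u : ℝ => f (x - u • s)) (-⟪gradient f (x - t • s), s⟫) t := by
  have hline : HasDerivAt (fun u : ℝ => x - u • s) (-s) t := by
    simpa using ((hasDerivAt_id t).smul_const s).const_sub x
  have h := hf.hasFDerivAt.comp_hasDerivAt t hline
  rwa [map_neg, ← inner_gradient_left] at h

theorem sub_div_two_le_sub_of_affine_le_inner_gradient {f : E → ℝ} (hf : Differentiable ℝ f)
    {x s : E} {a b : ℝ} (h : ∀ t ∈ Icc (0 : ℝ) 1, a - b * t ≤ ⟪gradient f (x - t • s), s⟫) :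
    a - b / 2 ≤ f x - f (x - s) := by
  have := sub_div_two_le_sub_of_affine_le_deriv
    (fun t _ => (hasDerivAt_comp_sub_smul (hf (x - t • s))).neg)
    (by simpa using h)
  simpa [sub_eq_neg_add, add_comm] using this

theorem ContDiff.differentiable_gradient {f : E → ℝ} (hf : ContDiff ℝ 2 f) :
    Differentiable ℝ (gradient f) :=
  (InnerProductSpace.toDual ℝ E).symm.differentiable.comp
    ((hf.fderiv_right (m := 1) (by norm_num)).differentiable one_ne_zero)

end Calculus

section GradientNormalizedSmoothness

variable {n : ℕ} {f : EuclideanSpace ℝ (Fin n) → ℝ} {H B : Matrix (Fin n) (Fin n) ℝ}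
  {x s : EuclideanSpace ℝ (Fin n)} {γ : ℝ}

-- The defining inequality of the gradient-normalized smoothness `γ(x)`, at radius `γ`.
def GradientNormalizedSmoothAt (f : EuclideanSpace ℝ (Fin n) → ℝ) (H B : Matrix (Fin n) (Fin n) ℝ)
    (x : EuclideanSpace ℝ (Fin n)) (γ : ℝ) : Prop :=
  ∀ h : EuclideanSpace ℝ (Fin n), normB B h ≤ γ →
    ⟪fderiv ℝ (gradient f) x h, h⟫ + ⟪gradient f x, h⟫ ≤ 0 →
    dualNormB B (gradient f (x + h) - gradient f x - toEuclideanLin H h)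
      ≤ dualNormB B (gradient f x) * normB B h / γ

theorem GradientNormalizedSmoothAt.dualNormB_residual_le_of_inner_le
    (hsm : GradientNormalizedSmoothAt f H B x γ) {t : ℝ} (ht : 0 ≤ t) (hlen : t * normB B s ≤ γ)
    (hcurv : t * ⟪fderiv ℝ (gradient f) x s, s⟫ ≤ ⟪gradient f x, s⟫) :
    dualNormB B (gradient f (x - t • s) - gradient f x + t • toEuclideanLin H s)
      ≤ dualNormB B (gradient f x) / γ * (t * normB B s) := by
  have hnorm : normB B (-(t • s)) = t * normB B s := by
    rw [normB_neg, normB_smul, abs_of_nonneg ht]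
  have h := hsm (-(t • s)) (hnorm ▸ hlen) (by
    simp only [map_neg, map_smul, inner_neg_left, inner_neg_right, neg_neg,
      real_inner_smul_left, real_inner_smul_right]
    nlinarith [mul_le_mul_of_nonneg_left hcurv ht])
  rwa [hnorm, map_neg, map_smul, ← sub_eq_add_neg, sub_neg_eq_add, mul_div_right_comm] at h

theorem dualNormB_le_of_hasDerivAt
    {G : ℝ → EuclideanSpace ℝ (Fin n)} {G' : EuclideanSpace ℝ (Fin n)} (hG : HasDerivAt G G' 0)
    (h0 : G 0 = 0) {c : ℝ} (hc : ∀ᶠ t in 𝓝[>] 0, dualNormB B (G t) ≤ c * t) :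
    dualNormB B G' ≤ c := by
  have hslope : Tendsto (fun t => dualNormB B (slope G 0 t)) (𝓝[>] 0) (𝓝 (dualNormB B G')) :=
    ((continuous_dualNormB B).tendsto G').comp
      ((hasDerivAt_iff_tendsto_slope.mp hG).mono_left (nhdsWithin_mono _ fun t ht => ne_of_gt ht))
  refine le_of_tendsto hslope ?_
  filter_upwards [hc, self_mem_nhdsWithin] with t ht htpos
  rwa [slope_def_module, h0, sub_zero, sub_zero, dualNormB_smul, abs_inv, abs_of_pos htpos,
    inv_mul_le_iff₀ htpos, mul_comm]

theorem GradientNormalizedSmoothAt.inner_fderiv_gradient_le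
    (hsm : GradientNormalizedSmoothAt f H B x γ) (hγ : 0 < γ) (hB : B.PosDef)
    (hdiff : DifferentiableAt ℝ (gradient f) x) (hp : 0 < ⟪gradient f x, s⟫) :
    ⟪fderiv ℝ (gradient f) x s, s⟫
      ≤ ⟪toEuclideanLin H s, s⟫ + dualNormB B (gradient f x) / γ * normB B s ^ 2 := by
  set Q := fderiv ℝ (gradient f) x
  set lam := dualNormB B (gradient f x) / γ
  have hsmall : ∀ᶠ t in 𝓝[>] (0 : ℝ),
      0 < t ∧ t * normB B s ≤ γ ∧ t * ⟪Q s, s⟫ ≤ ⟪gradient f x, s⟫ := by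
    have hlim (c : ℝ) : Tendsto (fun t => t * c) (𝓝[>] 0) (𝓝 0) := by
      simpa using ((continuous_mul_const c).tendsto 0).mono_left nhdsWithin_le_nhds
    filter_upwards [self_mem_nhdsWithin, (hlim _).eventually (ge_mem_nhds hγ),
      (hlim _).eventually (ge_mem_nhds hp)] with t ht hlen hcurv
    exact ⟨ht, hlen, hcurv⟩
  have hderiv : HasDerivAt (fun t : ℝ => gradient f (x - t • s) - gradient f x +
      t • toEuclideanLin H s) (toEuclideanLin H s - Q s) 0 := by
    have hline : HasDerivAt (fun t : ℝ => x - t • s) (-s) 0 := by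
      simpa using ((hasDerivAt_id (0 : ℝ)).smul_const s).const_sub x
    have h := (hdiff.hasFDerivAt.comp_hasDerivAt_of_eq 0 hline (by simp)).sub_const
      (gradient f x) |>.add ((hasDerivAt_id' 0).smul_const (toEuclideanLin H s))
    simp only [map_neg, neg_add_eq_sub, one_smul] at h
    exact h
  have hres : dualNormB B (toEuclideanLin H s - Q s) ≤ lam * normB B s :=
    dualNormB_le_of_hasDerivAt hderiv (by simp) <| hsmall.mono fun t ⟨ht, hlen, hcurv⟩ => by
      simpa [mul_comm, mul_assoc, mul_left_comm] using
        hsm.dualNormB_residual_le_of_inner_le ht.le hlen hcurv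
  have hcs := inner_le_dualNormB_mul_normB hB (Q s - toEuclideanLin H s) s
  rw [← dualNormB_neg, neg_sub, inner_sub_left] at hcs
  linear_combination hcs.trans (mul_le_mul_of_nonneg_right hres (normB_nonneg B s))

end GradientNormalizedSmoothness

section RegularizedNewtonStep

variable {n : ℕ} {f : EuclideanSpace ℝ (Fin n) → ℝ} {H B : Matrix (Fin n) (Fin n) ℝ}
  {x s g : EuclideanSpace ℝ (Fin n)} {γ lam : ℝ}

theorem inner_eq_of_add_smul_eq (hB : B.PosSemidef)
    (hs : toEuclideanLin H s + lam • toEuclideanLin B s = g) :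
    ⟪g, s⟫ = ⟪toEuclideanLin H s, s⟫ + lam * normB B s ^ 2 := by
  rw [← hs, inner_add_left, real_inner_smul_left, sq_normB hB,
    real_inner_comm (toEuclideanLin B s)]

theorem GradientNormalizedSmoothAt.dualNormB_residual_le_of_add_smul_eq
    (hsm : GradientNormalizedSmoothAt f H B x γ) (hγ : 0 < γ) (hH : H.PosSemidef) (hB : B.PosDef)
    (hdiff : DifferentiableAt ℝ (gradient f) x) (hg : gradient f x ≠ 0)
    (hs : toEuclideanLin H s + (dualNormB B (gradient f x) / γ) • toEuclideanLin B s
      = gradient f x)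
    {t : ℝ} (ht : t ∈ Icc (0 : ℝ) 1) :
    dualNormB B (gradient f (x - t • s) - gradient f x + t • toEuclideanLin H s)
      ≤ dualNormB B (gradient f x) / γ * (t * normB B s) := by
  set lam := dualNormB B (gradient f x) / γ
  have hlam : 0 < lam := div_pos (dualNormB_pos hB hg) hγ
  have hs0 : s ≠ 0 := by
    rintro rfl
    exact hg (by simpa using hs.symm)
  have hns : 0 < normB B s := normB_pos hB hs0
  have hHs : 0 ≤ ⟪toEuclideanLin H s, s⟫ :=
    (isPositive_toEuclideanLin_iff.mpr hH).inner_nonneg_left s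
  have hp := inner_eq_of_add_smul_eq hB.posSemidef hs
  have hlen : normB B s ≤ γ := by
    have hcs := inner_le_dualNormB_mul_normB hB (gradient f x) s
    rw [← div_mul_cancel₀ (dualNormB B (gradient f x)) hγ.ne'] at hcs
    nlinarith [mul_pos hlam hns]
  have hpos : 0 < ⟪gradient f x, s⟫ := by rw [hp]; positivity
  have hcurv := hsm.inner_fderiv_gradient_le hγ hB hdiff hpos
  rw [← hp] at hcurv
  refine hsm.dualNormB_residual_le_of_inner_le ht.1 (by nlinarith [ht.2]) ?_
  nlinarith [mul_le_mul_of_nonneg_left hcurv ht.1, ht.2]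

theorem le_sub_of_dualNormB_residual_le (hf : Differentiable ℝ f) (hH : H.PosSemidef)
    (hB : B.PosDef) (hs : toEuclideanLin H s + lam • toEuclideanLin B s = gradient f x)
    (hres : ∀ t ∈ Icc (0 : ℝ) 1,
      dualNormB B (gradient f (x - t • s) - gradient f x + t • toEuclideanLin H s)
        ≤ lam * (t * normB B s)) :
    lam * normB B s ^ 2 / 2 ≤ f x - f (x - s) := by
  set p := ⟪gradient f x, s⟫
  have hp : p = ⟪toEuclideanLin H s, s⟫ + lam * normB B s ^ 2 :=
    inner_eq_of_add_smul_eq hB.posSemidef hs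
  have hHs : 0 ≤ ⟪toEuclideanLin H s, s⟫ :=
    (isPositive_toEuclideanLin_iff.mpr hH).inner_nonneg_left s
  suffices p - p / 2 ≤ f x - f (x - s) by linarith
  refine sub_div_two_le_sub_of_affine_le_inner_gradient hf fun t ht => ?_
  set r := gradient f (x - t • s) - gradient f x + t • toEuclideanLin H s
  have hr : -(lam * (t * normB B s) * normB B s) ≤ ⟪r, s⟫ := by
    have h := inner_le_dualNormB_mul_normB hB (-r) s
    rw [dualNormB_neg, inner_neg_left] at h
    have hrt : dualNormB B r ≤ lam * (t * normB B s) := hres t ht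
    linarith [h.trans (mul_le_mul_of_nonneg_right hrt (normB_nonneg B s))]
  have hsplit : gradient f (x - t • s) = r + gradient f x - t • toEuclideanLin H s := by
    simp only [r]; abel
  rw [hsplit, inner_sub_left, inner_add_left, real_inner_smul_left]
  linear_combination hr - t * hp

theorem dualNormB_le_of_add_smul_eq (hB : B.PosDef) (hlam : 0 ≤ lam)
    {g' : EuclideanSpace ℝ (Fin n)}
    (hs : toEuclideanLin H s + lam • toEuclideanLin B s = g)
    (hres : dualNormB B (g' - g + toEuclideanLin H s) ≤ lam * normB B s) :
    dualNormB B g' ≤ 2 * lam * normB B s := by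
  have hsplit : g' = (g' - g + toEuclideanLin H s) + lam • toEuclideanLin B s := by
    rw [← hs]; abel
  calc dualNormB B g' = dualNormB B ((g' - g + toEuclideanLin H s) + lam • toEuclideanLin B s) :=
        congrArg _ hsplit
    _ ≤ dualNormB B (g' - g + toEuclideanLin H s) + dualNormB B (lam • toEuclideanLin B s) :=
        dualNormB_add_le hB _ _
    _ ≤ lam * normB B s + lam * normB B s := by
        rw [dualNormB_smul, dualNormB_toEuclideanLin hB, abs_of_nonneg hlam]
        exact add_le_add hres le_rfl
    _ = 2 * lam * normB B s := by ring

end RegularizedNewtonStep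

theorem regularized_newton_step_progress {n : ℕ}
    (f : EuclideanSpace ℝ (Fin n) → ℝ) (hf : ContDiff ℝ 2 f)
    (H B : Matrix (Fin n) (Fin n) ℝ) (hH : H.PosSemidef) (hB : B.PosDef)
    (x : EuclideanSpace ℝ (Fin n)) (hg : gradient f x ≠ 0)
    (γ : ℝ) (hγ : 0 < γ)
    (hsmooth : ∀ h : EuclideanSpace ℝ (Fin n),
      normB B h ≤ γ →
      ⟪fderiv ℝ (gradient f) x h, h⟫ + ⟪gradient f x, h⟫ ≤ 0 →
      dualNormB B (gradient f (x + h) - gradient f x - Matrix.toEuclideanLin H h)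
        ≤ dualNormB B (gradient f x) * normB B h / γ)
    (xp : EuclideanSpace ℝ (Fin n))
    (hxp : xp = x - Matrix.toEuclideanLin
        (H + (dualNormB B (gradient f x) / γ) • B)⁻¹ (gradient f x)) :
    f x - f xp ≥ γ / 8 * (dualNormB B (gradient f xp)) ^ 2 / dualNormB B (gradient f x) := by
  set g := gradient f x
  set lam := dualNormB B g / γ with hlam_def
  have hdg : 0 < dualNormB B g := dualNormB_pos hB hg
  have hlam : 0 < lam := div_pos hdg hγ
  set s := toEuclideanLin (H + lam • B)⁻¹ g
  have hs : toEuclideanLin H s + lam • toEuclideanLin B s = g := by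
    simpa using toEuclideanLin_apply_inv_apply
      (PosDef.posSemidef_add hH (hB.smul hlam)).det_pos.ne'.isUnit g
  have hres (t : ℝ) (ht : t ∈ Icc (0 : ℝ) 1) :=
    GradientNormalizedSmoothAt.dualNormB_residual_le_of_add_smul_eq hsmooth hγ hH hB
      (hf.differentiable_gradient x) hg hs ht
  have hdec := le_sub_of_dualNormB_residual_le (hf.differentiable two_ne_zero) hH hB hs hres
  have hgrad := dualNormB_le_of_add_smul_eq hB hlam.le hs
    (by simpa using hres 1 (right_mem_Icc.mpr zero_le_one))
  rw [hxp, ge_iff_le]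
  calc γ / 8 * dualNormB B (gradient f (x - s)) ^ 2 / dualNormB B g
      ≤ γ / 8 * (2 * lam * normB B s) ^ 2 / dualNormB B g := by
        gcongr
        exact dualNormB_nonneg B _
    _ = lam * normB B s ^ 2 / 2 := by
        rw [hlam_def]
        field_simp
        ring
    _ ≤ f x - f (x - s) := hdec
end

section
/- Let u : ℝⁿ → ℝᵈ be C², G ∈ ℝ^{d×d} symmetric positive definite, p ≥ 2, and f(x) := (1/p)⟨Gu(x),u(x)⟩^{p/2}. Define H(x) := ‖u(x)‖^{p−2}∇u(x)ᵀG∇u(x) + ((p−2)/‖u(x)‖^p)∇f(x)∇f(x)ᵀ where ‖u(x)‖ := ⟨Gu(x),u(x)⟩^{1/2}. If ‖∇²u(x)‖ ≤ ξ₁ (in the appropriate induced norm), then ‖∇²f(x) − H(x)‖ ≤ ξ₁‖u(x)‖^{p−1}. If additionally ∇u(x)B^{-1}∇u(x)ᵀ ⪰ μG^{-1} for some μ > 0, then ‖∇²f(x) − H(x)‖ ≤ (ξ₁/√μ)‖∇f(x)‖_*. -/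
open Matrix
open scoped RealInnerProductSpace

/-!
Write `q = ⟪u, G u⟫`, so that `f = q ^ (p / 2) / p`. The chain rule gives
`∇²f[h,h] = (p - 2) / 4 · q ^ (p/2 - 2) (Dq h)² + ½ q ^ (p/2 - 1) D²q[h,h]` with
`Dq h = 2⟪G u, Du h⟫` and `D²q[h,h] = 2⟪G u, D²u[h,h]⟫ + 2⟪G Du h, Du h⟫`. The first term is the
rank-one term `(p - 2) / ‖u‖ᵖ (Df h)²` of `H`, and `q ^ (p/2 - 1)⟪G Du h, Du h⟫` is its Gauss-Newton
term, so `∇²f - H = ‖u‖ᵖ⁻²⟪G u, D²u[h,h]⟫`, which the bound on `∇²u` controls by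
`ξ₁ ‖u‖ᵖ⁻¹ ‖h‖²`. Where `q x = 0` and `p > 2`, `x` minimises `q`, so `Dq y = O(y - x)` and
`Df y = ½ q(y) ^ (p/2 - 1) Dq y = o(y - x)`: both sides of the identity vanish.
For the second bound, `∇f = ‖u‖ᵖ⁻² ∇uᵀ G u`, and the non-degeneracy assumption applied to
`w = G u` gives `‖∇f‖_*² ≥ μ ‖u‖^(2(p - 1))`.
-/

open Topology Asymptotics

section RpowComp

variable {E : Type*} [NormedAddCommGroup E] [NormedSpace ℝ E] {q : E → ℝ} {r : ℝ}

theorem fderiv_rpow_const_of_one_le (hq : Differentiable ℝ q) (hr : 1 ≤ r) :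
    fderiv ℝ (fun y => q y ^ r) = fun y => (r * q y ^ (r - 1)) • fderiv ℝ q y :=
  funext fun y => ((hq y).hasFDerivAt.rpow_const (Or.inr hr)).fderiv

theorem hasFDerivAt_fderiv_rpow_const_of_eq_zero (hq : ContDiff ℝ 2 q) {x : E} (hx : q x = 0)
    (hdx : fderiv ℝ q x = 0) (hr : 1 < r) :
    HasFDerivAt (𝕜 := ℝ) (fderiv ℝ fun y => q y ^ r) 0 x := by
  have hq1 : Differentiable ℝ q := hq.differentiable (by norm_num)
  have hcoef : (fun y => r * q y ^ (r - 1)) =o[𝓝 x] fun _ => (1 : ℝ) := by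
    rw [isLittleO_one_iff]
    have := ((hq1.continuous.continuousAt (x := x)).rpow_const
      (Or.inr (sub_nonneg.2 hr.le))).const_mul r
    simpa [ContinuousAt, hx, Real.zero_rpow (sub_pos.2 hr).ne'] using this
  have hlin : (fun y => fderiv ℝ q y) =O[𝓝 x] fun y => y - x := by
    simpa [hdx] using ((hq.fderiv_right (m := 1) (by norm_num)).differentiable
      (by norm_num) x).hasFDerivAt.isBigO_sub
  rw [hasFDerivAt_iff_isLittleO, fderiv_rpow_const_of_one_le hq1 hr.le]
  simpa [hdx] using hcoef.smul_isBigO hlin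

theorem fderiv_fderiv_rpow_const_apply_of_ne_zero (hq : ContDiff ℝ 2 q) (hr : 1 ≤ r) {x : E}
    (hx : q x ≠ 0) (h k : E) :
    fderiv ℝ (fderiv ℝ fun y => q y ^ r) x h k =
      r * (r - 1) * q x ^ (r - 2) * (fderiv ℝ q x h * fderiv ℝ q x k) +
        r * q x ^ (r - 1) * fderiv ℝ (fderiv ℝ q) x h k := by
  have hq1 : Differentiable ℝ q := hq.differentiable (by norm_num)
  have hcoef := ((hq1 x).hasFDerivAt.rpow_const (p := r - 1) (Or.inl hx)).const_mul r
  have hdq := ((hq.fderiv_right (m := 1) (by norm_num)).differentiable (by norm_num) x).hasFDerivAt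
  rw [fderiv_rpow_const_of_one_le hq1 hr, (hcoef.fun_smul hdq).fderiv]
  simp only [_root_.add_apply, _root_.smul_apply,
    ContinuousLinearMap.smulRight_apply, smul_eq_mul]
  rw [show r - 1 - 1 = r - 2 by ring]
  ring

theorem fderiv_fderiv_rpow_const_apply (hq : ContDiff ℝ 2 q) (hq0 : ∀ y, 0 ≤ q y) (hr : 1 ≤ r)
    (x h k : E) :
    fderiv ℝ (fderiv ℝ fun y => q y ^ r) x h k =
      r * (r - 1) * q x ^ (r - 2) * (fderiv ℝ q x h * fderiv ℝ q x k) +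
        r * q x ^ (r - 1) * fderiv ℝ (fderiv ℝ q) x h k := by
  rcases hr.eq_or_lt with rfl | hr'
  · simp
  rcases (hq0 x).eq_or_lt with hx | hx
  · have hdx : fderiv ℝ q x = 0 :=
      IsLocalMin.fderiv_eq_zero (.of_forall fun y => hx ▸ hq0 y)
    rw [(hasFDerivAt_fderiv_rpow_const_of_eq_zero hq hx.symm hdx hr').fderiv, ← hx,
      Real.zero_rpow (sub_pos.2 hr').ne', hdx]
    simp
  · exact fderiv_fderiv_rpow_const_apply_of_ne_zero hq hr hx.ne' h k

variable {p : ℝ}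

theorem fderiv_one_div_mul_rpow_div_two (hq : Differentiable ℝ q) (hp : 2 ≤ p) :
    fderiv ℝ (fun y => 1 / p * q y ^ (p / 2)) =
      fun y => (1 / 2 * q y ^ (p / 2 - 1)) • fderiv ℝ q y := by
  have hp0 : p ≠ 0 := by positivity
  rw [show (fun y => 1 / p * q y ^ (p / 2)) = (1 / p : ℝ) • fun y => q y ^ (p / 2) from rfl,
    fderiv_const_smul_field, fderiv_rpow_const_of_one_le hq (by linarith)]
  funext y
  simp only [Pi.smul_apply, smul_smul]
  congr 1
  field_simp

theorem iteratedFDeriv_two_one_div_mul_rpow_div_two_apply (hq : ContDiff ℝ 2 q)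
    (hq0 : ∀ y, 0 ≤ q y) (hp : 2 ≤ p) (x h : E) :
    iteratedFDeriv ℝ 2 (fun y => 1 / p * q y ^ (p / 2)) x ![h, h] =
      (p - 2) / √(q x) ^ p * fderiv ℝ (fun y => 1 / p * q y ^ (p / 2)) x h ^ 2 +
        1 / 2 * q x ^ (p / 2 - 1) * fderiv ℝ (fderiv ℝ q) x h h := by
  have hp0 : p ≠ 0 := by positivity
  have hfisher : (p - 2) / √(q x) ^ p * (1 / 2 * q x ^ (p / 2 - 1) * fderiv ℝ q x h) ^ 2 =
      p / 2 * (p / 2 - 1) * q x ^ (p / 2 - 2) * (fderiv ℝ q x h * fderiv ℝ q x h) / p := by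
    rcases (hq0 x).eq_or_lt with hx | hx
    · have hdx : fderiv ℝ q x = 0 :=
        IsLocalMin.fderiv_eq_zero (.of_forall fun y => hx ▸ hq0 y)
      simp [hdx]
    · have hsq : (q x ^ (p / 2 - 1)) ^ 2 = q x ^ (p / 2 - 2) * q x ^ (p / 2) := by
        rw [sq, ← Real.rpow_add hx, ← Real.rpow_add hx]
        ring_nf
      rw [← Real.rpow_div_two_eq_sqrt _ (hq0 x), mul_pow, mul_pow, hsq]
      field_simp
  have hDf : fderiv ℝ (fun y => 1 / p * q y ^ (p / 2)) x h =
      1 / 2 * q x ^ (p / 2 - 1) * fderiv ℝ q x h := by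
    rw [fderiv_one_div_mul_rpow_div_two (hq.differentiable (by norm_num)) hp]
    rfl
  rw [iteratedFDeriv_two_apply]
  simp only [Matrix.cons_val_zero, Matrix.cons_val_one, Matrix.cons_val_fin_one]
  rw [hDf, hfisher,
    show (fun y => 1 / p * q y ^ (p / 2)) = (1 / p : ℝ) • fun y => q y ^ (p / 2) from rfl,
    fderiv_const_smul_field, fderiv_const_smul_field (f := fderiv ℝ fun y => q y ^ (p / 2))]
  simp only [Pi.smul_apply, _root_.smul_apply, smul_eq_mul]
  rw [fderiv_fderiv_rpow_const_apply hq hq0 (by linarith)]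
  field_simp

end RpowComp

section InnerMapSelf

variable {E F : Type*} [NormedAddCommGroup E] [NormedSpace ℝ E]
  [NormedAddCommGroup F] [InnerProductSpace ℝ F] {G : F →L[ℝ] F} {u : E → F}

theorem fderiv_inner_map_self (hG : G.IsSymmetric) (hu : Differentiable ℝ u) :
    fderiv ℝ (fun y => ⟪u y, G (u y)⟫) =
      fun y => (2 : ℝ) • (innerSL ℝ (G (u y))).comp (fderiv ℝ u y) := by
  funext y
  have hu' := (hu y).hasFDerivAt
  refine (hu'.inner ℝ (G.hasFDerivAt.comp y hu')).fderiv.trans ?_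
  ext k
  simp only [ContinuousLinearMap.comp_apply, fderivInnerCLM_apply, ContinuousLinearMap.prod_apply,
    _root_.smul_apply, innerSL_apply_apply, smul_eq_mul, Function.comp_apply]
  rw [← hG.apply_clm (u y), real_inner_comm (fderiv ℝ u y k)]
  ring

theorem fderiv_fderiv_inner_map_self_apply (hG : G.IsSymmetric) (hu : ContDiff ℝ 2 u)
    (x h k : E) :
    fderiv ℝ (fderiv ℝ fun y => ⟪u y, G (u y)⟫) x h k =
      2 * (⟪G (u x), fderiv ℝ (fderiv ℝ u) x h k⟫ + ⟪G (fderiv ℝ u x h), fderiv ℝ u x k⟫) := by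
  have hu1 : Differentiable ℝ u := hu.differentiable (by norm_num)
  have hinner : HasFDerivAt (fun y => innerSL ℝ (G (u y)))
      (((innerSL ℝ).comp G).comp (fderiv ℝ u x)) x :=
    ((innerSL ℝ).comp G).hasFDerivAt.comp x (hu1 x).hasFDerivAt
  have hdu := ((hu.fderiv_right (m := 1) (by norm_num)).differentiable (by norm_num) x).hasFDerivAt
  rw [fderiv_inner_map_self hG hu1, ((hinner.clm_comp hdu).fun_const_smul (2 : ℝ)).fderiv]
  simp [mul_add]

end InnerMapSelf

theorem Real.rpow_div_two_sub_one_mul_sqrt {t p : ℝ} (ht : 0 ≤ t) (hp : p ≠ 1) :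
    t ^ (p / 2 - 1) * √t = √t ^ (p - 1) := by
  rw [show p / 2 - 1 = (p - 2) / 2 by ring, Real.rpow_div_two_eq_sqrt _ ht,
    ← Real.rpow_add_one' (Real.sqrt_nonneg t) (by contrapose! hp; linarith)]
  ring_nf

section GaussNewton

variable {E F : Type*} [NormedAddCommGroup E] [NormedSpace ℝ E]
  [NormedAddCommGroup F] [InnerProductSpace ℝ F] {G : F →L[ℝ] F} {u : E → F} {p : ℝ}

theorem iteratedFDeriv_two_rpow_inner_map_self_sub (hG : G.IsPositive) (hu : ContDiff ℝ 2 u)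
    (hp : 2 ≤ p) (x h : E) :
    iteratedFDeriv ℝ 2 (fun y => 1 / p * ⟪u y, G (u y)⟫ ^ (p / 2)) x ![h, h] -
        (√⟪u x, G (u x)⟫ ^ (p - 2) * ⟪fderiv ℝ u x h, G (fderiv ℝ u x h)⟫ +
          (p - 2) / √⟪u x, G (u x)⟫ ^ p *
            fderiv ℝ (fun y => 1 / p * ⟪u y, G (u y)⟫ ^ (p / 2)) x h ^ 2) =
      ⟪u x, G (u x)⟫ ^ (p / 2 - 1) * ⟪G (u x), iteratedFDeriv ℝ 2 u x ![h, h]⟫ := by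
  have hq0 : ∀ y, 0 ≤ ⟪u y, G (u y)⟫ := fun y => hG.re_inner_nonneg_right (u y)
  have hq : ContDiff ℝ 2 fun y => ⟪u y, G (u y)⟫ := hu.inner ℝ (G.contDiff.comp hu)
  have hsqrt : √⟪u x, G (u x)⟫ ^ (p - 2) = ⟪u x, G (u x)⟫ ^ (p / 2 - 1) := by
    rw [← Real.rpow_div_two_eq_sqrt _ (hq0 x)]
    ring_nf
  rw [iteratedFDeriv_two_one_div_mul_rpow_div_two_apply hq hq0 hp,
    fderiv_fderiv_inner_map_self_apply hG.isSymmetric hu, iteratedFDeriv_two_apply u, hsqrt,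
    real_inner_comm (fderiv ℝ u x h) (G _)]
  simp only [Matrix.cons_val_zero, Matrix.cons_val_one, Matrix.cons_val_fin_one]
  ring

theorem abs_iteratedFDeriv_two_rpow_inner_map_self_sub_le (hG : G.IsPositive)
    (hu : ContDiff ℝ 2 u) (hp : 2 ≤ p) {x h : E} {ξ c : ℝ}
    (hc : |⟪G (u x), iteratedFDeriv ℝ 2 u x ![h, h]⟫| ≤ ξ * √⟪u x, G (u x)⟫ * c) :
    |iteratedFDeriv ℝ 2 (fun y => 1 / p * ⟪u y, G (u y)⟫ ^ (p / 2)) x ![h, h] -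
        (√⟪u x, G (u x)⟫ ^ (p - 2) * ⟪fderiv ℝ u x h, G (fderiv ℝ u x h)⟫ +
          (p - 2) / √⟪u x, G (u x)⟫ ^ p *
            fderiv ℝ (fun y => 1 / p * ⟪u y, G (u y)⟫ ^ (p / 2)) x h ^ 2)| ≤
      ξ * √⟪u x, G (u x)⟫ ^ (p - 1) * c := by
  have hq : 0 ≤ ⟪u x, G (u x)⟫ := hG.re_inner_nonneg_right (u x)
  rw [iteratedFDeriv_two_rpow_inner_map_self_sub hG hu hp, abs_mul,
    abs_of_nonneg (Real.rpow_nonneg hq _), ← Real.rpow_div_two_sub_one_mul_sqrt hq (by linarith)]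
  calc _ ≤ ⟪u x, G (u x)⟫ ^ (p / 2 - 1) * (ξ * √⟪u x, G (u x)⟫ * c) := by gcongr
    _ = _ := by ring

end GaussNewton

section Gradient

variable {E F : Type*} [NormedAddCommGroup E] [InnerProductSpace ℝ E] [CompleteSpace E]
  [NormedAddCommGroup F] [InnerProductSpace ℝ F] [CompleteSpace F] {G : F →L[ℝ] F} {u : E → F}
  {p : ℝ}

theorem gradient_rpow_inner_map_self (hG : G.IsSymmetric) (hu : Differentiable ℝ u) (hp : 2 ≤ p)
    (x : E) :
    gradient (fun y => 1 / p * ⟪u y, G (u y)⟫ ^ (p / 2)) x =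
      ⟪u x, G (u x)⟫ ^ (p / 2 - 1) • ContinuousLinearMap.adjoint (fderiv ℝ u x) (G (u x)) := by
  have hq : Differentiable ℝ fun y => ⟪u y, G (u y)⟫ := hu.inner ℝ (G.differentiable.comp hu)
  refine ext_inner_right ℝ fun h => ?_
  rw [inner_gradient_left, fderiv_one_div_mul_rpow_div_two hq hp,
    fderiv_inner_map_self hG hu, real_inner_smul_left, ContinuousLinearMap.adjoint_inner_left]
  simp only [_root_.smul_apply, ContinuousLinearMap.comp_apply, innerSL_apply_apply, smul_eq_mul]
  ring

end Gradient

theorem sqrt_mul_sqrt_rpow_le_dualNormB {n d : ℕ} (B : Matrix (Fin n) (Fin n) ℝ)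
    {G : Matrix (Fin d) (Fin d) ℝ} (hG : G.PosDef)
    {A : EuclideanSpace ℝ (Fin n) →L[ℝ] EuclideanSpace ℝ (Fin d)} {μ p : ℝ}
    (hA : ∀ w, μ * ⟪w, toEuclideanLin G⁻¹ w⟫ ≤
      ⟪ContinuousLinearMap.adjoint A w, toEuclideanLin B⁻¹ (ContinuousLinearMap.adjoint A w)⟫)
    (hp : 2 ≤ p) (v : EuclideanSpace ℝ (Fin d)) :
    √μ * √⟪v, toEuclideanLin G v⟫ ^ (p - 1) ≤
      dualNormB B (⟪v, toEuclideanLin G v⟫ ^ (p / 2 - 1) •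
        ContinuousLinearMap.adjoint A (toEuclideanLin G v)) := by
  set q := ⟪v, toEuclideanLin G v⟫
  set w := ContinuousLinearMap.adjoint A (toEuclideanLin G v)
  have hq : 0 ≤ q := (isPositive_toEuclideanLin_iff.mpr hG.posSemidef).re_inner_nonneg_right v
  have hinv : ⟪toEuclideanLin G v, toEuclideanLin G⁻¹ (toEuclideanLin G v)⟫ = q := by
    have hdet : IsUnit G.det := isUnit_iff_ne_zero.mpr hG.det_pos.ne'
    rw [real_inner_comm]
    congr 1
    simp [toLpLin_apply, mulVec_mulVec, nonsing_inv_mul G hdet]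
  have hpow : (q ^ (p / 2 - 1)) ^ 2 * q = q ^ (p - 1) := by
    rw [← Real.rpow_natCast, ← Real.rpow_mul hq, ← Real.rpow_add_one' hq (by push_cast; linarith)]
    congr 1
    push_cast
    ring
  rw [dualNormB]
  calc √μ * √q ^ (p - 1) = √(μ * q ^ (p - 1)) := by
        rw [Real.sqrt_mul' _ (Real.rpow_nonneg hq _), ← Real.rpow_div_two_eq_sqrt _ hq,
          Real.sqrt_eq_rpow (q ^ (p - 1)), ← Real.rpow_mul hq]
        ring_nf
    _ ≤ _ := by
        refine Real.sqrt_le_sqrt ?_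
        rw [map_smul, real_inner_smul_left, real_inner_smul_right, ← hpow, ← hinv]
        nlinarith [hA (toEuclideanLin G v), sq_nonneg (q ^ (p / 2 - 1))]

theorem nonlinear_equations_hessian_approx_general {n d : ℕ}
    (B : Matrix (Fin n) (Fin n) ℝ)
    (G : Matrix (Fin d) (Fin d) ℝ) (hG : G.PosDef)
    (p : ℝ) (hp : 2 ≤ p)
    (u : EuclideanSpace ℝ (Fin n) → EuclideanSpace ℝ (Fin d))
    (hu : ContDiff ℝ 2 u)
    (uNorm : EuclideanSpace ℝ (Fin n) → ℝ)
    (huNorm : uNorm = fun x => Real.sqrt ⟪u x, Matrix.toEuclideanLin G (u x)⟫)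
    (f : EuclideanSpace ℝ (Fin n) → ℝ)
    (hf : f = fun x => 1 / p * ⟪u x, Matrix.toEuclideanLin G (u x)⟫ ^ (p / 2))
    (Hq : EuclideanSpace ℝ (Fin n) → EuclideanSpace ℝ (Fin n) → ℝ)
    (hHq : Hq = fun x h =>
      uNorm x ^ (p - 2) *
          ⟪fderiv ℝ u x h, Matrix.toEuclideanLin G (fderiv ℝ u x h)⟫ +
        (p - 2) / uNorm x ^ p * ⟪gradient f x, h⟫ ^ 2)
    (ξ₁ : ℝ) (hξ₁ : 0 < ξ₁)
    (hsecond : ∀ (x h : EuclideanSpace ℝ (Fin n)),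
      |⟪Matrix.toEuclideanLin G (u x), iteratedFDeriv ℝ 2 u x ![h, h]⟫|
        ≤ ξ₁ * uNorm x * normB B h ^ 2) :
    (∀ x h : EuclideanSpace ℝ (Fin n),
        |iteratedFDeriv ℝ 2 f x ![h, h] - Hq x h|
          ≤ ξ₁ * uNorm x ^ (p - 1) * normB B h ^ 2) ∧
      (∀ μ : ℝ, 0 < μ →
        (∀ (x : EuclideanSpace ℝ (Fin n)) (w : EuclideanSpace ℝ (Fin d)),
          μ * ⟪w, Matrix.toEuclideanLin G⁻¹ w⟫
            ≤ ⟪ContinuousLinearMap.adjoint (fderiv ℝ u x) w,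
                Matrix.toEuclideanLin B⁻¹
                  (ContinuousLinearMap.adjoint (fderiv ℝ u x) w)⟫) →
        ∀ x h : EuclideanSpace ℝ (Fin n),
          |iteratedFDeriv ℝ 2 f x ![h, h] - Hq x h|
            ≤ ξ₁ / Real.sqrt μ * dualNormB B (gradient f x) * normB B h ^ 2) := by
  subst huNorm hf hHq
  set G' := LinearMap.toContinuousLinearMap (toEuclideanLin G)
  have hG' : G'.IsPositive := isPositive_toEuclideanLin_iff.mpr hG.posSemidef
  have hG'_apply : ∀ v, toEuclideanLin G v = G' v := fun _ => rfl
  have part1 := fun x h =>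
    abs_iteratedFDeriv_two_rpow_inner_map_self_sub_le hG' hu hp (x := x) (h := h) (hsecond x h)
  simp only [inner_gradient_left, hG'_apply]
  refine ⟨part1, fun μ hμ hA x h => (part1 x h).trans ?_⟩
  have hD := sqrt_mul_sqrt_rpow_le_dualNormB B hG (hA x) hp (u x)
  simp only [hG'_apply] at hD
  rw [gradient_rpow_inner_map_self hG'.isSymmetric (hu.differentiable (by norm_num)) hp]
  calc _ = ξ₁ / √μ * (√μ * √⟪u x, G' (u x)⟫ ^ (p - 1)) * normB B h ^ 2 := by
        field_simp
    _ ≤ _ := by gcongr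

/-- Hessian approximation error bounds for `f(x) = (1/p)⟨G u(x), u(x)⟩^{p/2}` with
the Gauss-Newton-plus-Fisher approximation
`H(x) = ‖u(x)‖^{p-2} ∇u(x)ᵀ G ∇u(x) + ((p-2)/‖u(x)‖^p) ∇f(x)∇f(x)ᵀ`,
expressed through quadratic forms. -/
theorem nonlinear_equations_hessian_approx {n d : ℕ}
    (B : Matrix (Fin n) (Fin n) ℝ) (hB : B.PosDef)
    (G : Matrix (Fin d) (Fin d) ℝ) (hG : G.PosDef) (hGsymm : G.IsSymm)
    (p : ℝ) (hp : 2 ≤ p)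
    (u : EuclideanSpace ℝ (Fin n) → EuclideanSpace ℝ (Fin d))
    (hu : ContDiff ℝ 2 u)
    (uNorm : EuclideanSpace ℝ (Fin n) → ℝ)
    (huNorm : uNorm = fun x => Real.sqrt ⟪u x, Matrix.toEuclideanLin G (u x)⟫)
    (f : EuclideanSpace ℝ (Fin n) → ℝ)
    (hf : f = fun x => 1 / p * ⟪u x, Matrix.toEuclideanLin G (u x)⟫ ^ (p / 2))
    (Hq : EuclideanSpace ℝ (Fin n) → EuclideanSpace ℝ (Fin n) → ℝ)
    (hHq : Hq = fun x h =>
      uNorm x ^ (p - 2) *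
          ⟪fderiv ℝ u x h, Matrix.toEuclideanLin G (fderiv ℝ u x h)⟫ +
        (p - 2) / uNorm x ^ p * ⟪gradient f x, h⟫ ^ 2)
    (ξ₁ : ℝ) (hξ₁ : 0 < ξ₁)
    (hsecond : ∀ (x h : EuclideanSpace ℝ (Fin n)),
      |⟪Matrix.toEuclideanLin G (u x), iteratedFDeriv ℝ 2 u x ![h, h]⟫|
        ≤ ξ₁ * uNorm x * normB B h ^ 2) :
    (∀ x h : EuclideanSpace ℝ (Fin n),
        |iteratedFDeriv ℝ 2 f x ![h, h] - Hq x h|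
          ≤ ξ₁ * uNorm x ^ (p - 1) * normB B h ^ 2) ∧
      (∀ μ : ℝ, 0 < μ →
        (∀ (x : EuclideanSpace ℝ (Fin n)) (w : EuclideanSpace ℝ (Fin d)),
          μ * ⟪w, Matrix.toEuclideanLin G⁻¹ w⟫
            ≤ ⟪ContinuousLinearMap.adjoint (fderiv ℝ u x) w,
                Matrix.toEuclideanLin B⁻¹
                  (ContinuousLinearMap.adjoint (fderiv ℝ u x) w)⟫) →
        ∀ x h : EuclideanSpace ℝ (Fin n),
          |iteratedFDeriv ℝ 2 f x ![h, h] - Hq x h|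
            ≤ ξ₁ / Real.sqrt μ * dualNormB B (gradient f x) * normB B h ^ 2) :=
  nonlinear_equations_hessian_approx_general B G hG p hp u hu uNorm huNorm f hf Hq hHq ξ₁ hξ₁
    hsecond
end
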